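/- arXiv:2208.03070 — 3 statements merged into one kernel-verified Lean document; each statement's English description precedes it below -/
import Mathlib

section
/- Let d = K·M with blocks B_1,…,B_K, let σ² > 0, let ε_n ∈ (0,1) and let R_n ∈ ℂ^{d×d} be Hermitian positive definite and block-diagonal for n = 1,…,N, and let L > 0. Define the state-evolution sequence by Σ^0 = σ²·I + (1/L)·Σ_{n=1}^N R_n and Σ^{t+1} = σ²·I + (1/L)·Σ_{n=1}^N E[(g_n^t(x_n+v^t)−x_n)(g_n^t(x_n+v^t)−x_n)^H], where x_n ∼ (1−ε_n)·δ_0 + ε_n·N_ℂ(0,R_n) independent of v^t ∼ N_ℂ(0,Σ^t), and g_n^t(ξ) = θ_n^t(ξ)·R_n(R_n+Σ^t)^{-1}ξ with θ_n^t(ξ) = (1 + ((1−ε_n)/ε_n)·(det(R_n+Σ^t)/det Σ^t)·exp(−ξ^H((Σ^t)^{-1}−(R_n+Σ^t)^{-1})ξ))^{-1}. Then for every t ≥ 0 the matrix Σ^t is well defined, Hermitian positive definite, and block-diagonal with respect to B_1,…,B_K. -/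
open MeasureTheory Matrix
open scoped ComplexOrder

noncomputable section
set_option linter.unusedSectionVars false


/-- Circularly-symmetric complex Gaussian density
`φ_A(ξ) = π^{-d} (det A)^{-1} exp(-ξ^H A^{-1} ξ)` on `ℂ^ι`. -/
def gaussDensity {ι : Type*} [Fintype ι] [DecidableEq ι] (A : Matrix ι ι ℂ) (ξ : ι → ℂ) : ℂ :=
  ((Real.pi : ℂ) ^ (Fintype.card ι))⁻¹ * (A.det)⁻¹ *
    Complex.exp (-(star ξ ⬝ᵥ (A⁻¹ *ᵥ ξ)))

/-- The complex Gaussian measure `N_ℂ(0, A)` on `ℂ^ι`, i.e. the measure whose density with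
respect to Lebesgue measure on `ℂ^ι ≅ ℝ^{2d}` is `φ_A`. -/
def gaussMeasure {ι : Type*} [Fintype ι] [DecidableEq ι] (A : Matrix ι ι ℂ) :
    Measure (ι → ℂ) :=
  volume.withDensity fun ξ => ENNReal.ofReal (gaussDensity A ξ).re

/-- Bernoulli–Gaussian measure `(1-ε)·δ_0 + ε·N_ℂ(0, A)`. -/
def bgMeasure {ι : Type*} [Fintype ι] [DecidableEq ι] (A : Matrix ι ι ℂ) (ε : ℝ) :
    Measure (ι → ℂ) :=
  ENNReal.ofReal (1 - ε) • Measure.dirac 0 + ENNReal.ofReal ε • gaussMeasure A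

/-- Scalar factor `θ(ξ) = (1 + ((1-ε)/ε)·(det(R+Σ)/det Σ)·exp(-ξ^H Ω ξ))⁻¹` of the MMSE
denoiser, with `Ω = Σ⁻¹ - (R+Σ)⁻¹`. -/
def mmseTheta {ι : Type*} [Fintype ι] [DecidableEq ι] (R S : Matrix ι ι ℂ) (ε : ℝ)
    (ξ : ι → ℂ) : ℂ :=
  (1 + (((1 - ε) / ε : ℝ) : ℂ) * ((R + S).det / S.det) *
      Complex.exp (-(star ξ ⬝ᵥ ((S⁻¹ - (R + S)⁻¹) *ᵥ ξ))))⁻¹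

/-- MMSE denoiser `g(ξ) = θ(ξ)·R(R+Σ)⁻¹ξ`. -/
def mmseDenoiser {ι : Type*} [Fintype ι] [DecidableEq ι] (R S : Matrix ι ι ℂ) (ε : ℝ)
    (ξ : ι → ℂ) : ι → ℂ :=
  mmseTheta R S ε ξ • ((R * (R + S)⁻¹) *ᵥ ξ)

open Classical in
/-- `η_I` : sign flip of the coordinates with indices in `I`. -/
def etaFlip {ι : Type*} (I : Set ι) (ξ : ι → ℂ) : ι → ℂ :=
  fun i => if i ∈ I then -ξ i else ξ i

/-- `k`-th `M × M` diagonal block of a matrix indexed by `Fin K × Fin M`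
(block `B_k = {k} × Fin M`). -/
def blk {K M : ℕ} (A : Matrix (Fin K × Fin M) (Fin K × Fin M) ℂ) (k : Fin K) :
    Matrix (Fin M) (Fin M) ℂ :=
  Matrix.of fun a b => A (k, a) (k, b)

/-- The AMP state-evolution sequence: `Σ^0 = σ²·I + (1/L)·∑ₙ Rₙ` and
`Σ^{t+1} = σ²·I + (1/L)·∑ₙ E[(gₙᵗ(xₙ+vᵗ)-xₙ)(gₙᵗ(xₙ+vᵗ)-xₙ)^H]`, where
`xₙ ∼ (1-εₙ)·δ_0 + εₙ·N_ℂ(0,Rₙ)` independent of `vᵗ ∼ N_ℂ(0,Σᵗ)` and `gₙᵗ` is the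
MMSE denoiser for `(Rₙ, Σᵗ, εₙ)`; the expectations are taken entrywise. -/
def stateSeq {ι : Type*} [Fintype ι] [DecidableEq ι] {N : ℕ}
    (σ2 L : ℝ) (ε : Fin N → ℝ) (R : Fin N → Matrix ι ι ℂ) : ℕ → Matrix ι ι ℂ
  | 0 => (σ2 : ℂ) • (1 : Matrix ι ι ℂ) + ((1 : ℂ) / (L : ℂ)) • ∑ n, R n
  | t + 1 =>
      (σ2 : ℂ) • (1 : Matrix ι ι ℂ) + ((1 : ℂ) / (L : ℂ)) •
        ∑ n, Matrix.of (fun i j =>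
          ∫ p : (ι → ℂ) × (ι → ℂ),
            (mmseDenoiser (R n) (stateSeq σ2 L ε R t) (ε n) (p.1 + p.2) i - p.1 i) *
              star (mmseDenoiser (R n) (stateSeq σ2 L ε R t) (ε n) (p.1 + p.2) j - p.1 j)
            ∂((bgMeasure (R n) (ε n)).prod (gaussMeasure (stateSeq σ2 L ε R t))))



namespace SE

variable {ι κ : Type*} [Fintype ι] [DecidableEq ι] [DecidableEq κ]

/-- block-diagonal w.r.t. block map `b` -/
def BD (b : ι → κ) (A : Matrix ι ι ℂ) : Prop := ∀ i j, b i ≠ b j → A i j = 0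

variable {b : ι → κ}

lemma BD.add {A B : Matrix ι ι ℂ} (hA : BD b A) (hB : BD b B) : BD b (A + B) :=
  fun i j h => by simp [Matrix.add_apply, hA i j h, hB i j h]

lemma BD.sub {A B : Matrix ι ι ℂ} (hA : BD b A) (hB : BD b B) : BD b (A - B) :=
  fun i j h => by simp [Matrix.sub_apply, hA i j h, hB i j h]

lemma BD.smul (c : ℂ) {A : Matrix ι ι ℂ} (hA : BD b A) : BD b (c • A) :=
  fun i j h => by simp [hA i j h]

lemma BD.one : BD b (1 : Matrix ι ι ℂ) :=
  fun i j h => Matrix.one_apply_ne (fun e => h (by rw [e]))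

lemma BD.sum {α : Type*} {s : Finset α} {f : α → Matrix ι ι ℂ}
    (h : ∀ a ∈ s, BD b (f a)) : BD b (∑ a ∈ s, f a) := fun i j hij => by
  rw [Matrix.sum_apply]; exact Finset.sum_eq_zero fun a ha => h a ha i j hij

lemma BD.mul {A B : Matrix ι ι ℂ} (hA : BD b A) (hB : BD b B) : BD b (A * B) := by
  intro i j h
  rw [Matrix.mul_apply]
  refine Finset.sum_eq_zero fun l _ => ?_
  by_cases hl : b l = b i
  · rw [hB l j (hl ▸ h), mul_zero]
  · rw [hA i l (fun e => hl e.symm), zero_mul]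

/-- the ±1 vector flipping block `k` -/
def dvec (b : ι → κ) (k : κ) : ι → ℂ := fun i => if b i = k then -1 else 1

lemma dvec_mul_self (k : κ) (i : ι) : dvec b k i * dvec b k i = 1 := by
  unfold dvec; split <;> norm_num

lemma star_dvec (k : κ) (i : ι) : star (dvec b k i) = dvec b k i := by
  unfold dvec; split <;> simp

lemma dvec_eq_of_block {k : κ} {i j : ι} (h : b i = b j) : dvec b k i = dvec b k j := by
  unfold dvec; rw [h]

lemma BD.commute_diagonal {A : Matrix ι ι ℂ} (hA : BD b A) (k : κ) :
    Matrix.diagonal (dvec b k) * A = A * Matrix.diagonal (dvec b k) := by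
  ext i j
  rw [Matrix.diagonal_mul, Matrix.mul_diagonal]
  by_cases h : b i = b j
  · rw [dvec_eq_of_block h, mul_comm]
  · rw [hA i j h, mul_zero, zero_mul]

lemma BD.inv {A : Matrix ι ι ℂ} (hA : BD b A) (h : IsUnit A.det) : BD b A⁻¹ := by
  intro i j hij
  set D := Matrix.diagonal (dvec b (b i)) with hD
  have h1 : A * A⁻¹ = 1 := Matrix.mul_nonsing_inv A h
  have h2 : A⁻¹ * A = 1 := Matrix.nonsing_inv_mul A h
  have hcomm : D * A⁻¹ = A⁻¹ * D := by
    calc D * A⁻¹ = A⁻¹ * A * D * A⁻¹ := by rw [h2, Matrix.one_mul]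
    _ = A⁻¹ * (A * D) * A⁻¹ := by rw [Matrix.mul_assoc A⁻¹ A D]
    _ = A⁻¹ * (D * A) * A⁻¹ := by rw [hA.commute_diagonal (b i)]
    _ = A⁻¹ * D * (A * A⁻¹) := by rw [Matrix.mul_assoc, Matrix.mul_assoc, Matrix.mul_assoc]
    _ = A⁻¹ * D := by rw [h1, Matrix.mul_one]
  have := congrArg (fun M => M i j) hcomm
  simp only [hD, Matrix.diagonal_mul, Matrix.mul_diagonal] at this
  have hdi : dvec b (b i) i = -1 := by unfold dvec; simp
  have hdj : dvec b (b i) j = 1 := by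
    unfold dvec; rw [if_neg (fun e : b j = b i => hij e.symm)]
  rw [hdi, hdj, mul_one, neg_one_mul] at this
  linear_combination (-1/2 : ℂ) * this

/-- sign flip of the coordinates in block `k` -/
def flip (b : ι → κ) (k : κ) (ξ : ι → ℂ) : ι → ℂ := fun i => dvec b k i * ξ i

lemma flip_flip (k : κ) (ξ : ι → ℂ) : flip b k (flip b k ξ) = ξ := by
  funext i; unfold flip; rw [← mul_assoc, dvec_mul_self, one_mul]

lemma flip_add (k : κ) (ξ η : ι → ℂ) : flip b k (ξ + η) = flip b k ξ + flip b k η := by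
  funext i; simp [flip, mul_add]

lemma flip_zero (k : κ) : flip b k (0 : ι → ℂ) = 0 := by
  funext i; simp [flip]

lemma flip_smul (k : κ) (c : ℂ) (ξ : ι → ℂ) : flip b k (c • ξ) = c • flip b k ξ := by
  funext i; simp [flip]; ring

lemma measurable_flip (k : κ) : Measurable (flip b k) :=
  measurable_pi_lambda _ fun i => ((measurable_pi_apply i).const_mul _)

/-- flip as a measurable equivalence -/
def flipEquiv (b : ι → κ) (k : κ) : (ι → ℂ) ≃ᵐ (ι → ℂ) where
  toFun := flip b k
  invFun := flip b k
  left_inv := flip_flip k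
  right_inv := flip_flip k
  measurable_toFun := measurable_flip k
  measurable_invFun := measurable_flip k

lemma measurePreserving_flip (k : κ) : MeasurePreserving (flip b k) volume volume := by
  have : flip b k = fun (a : ι → ℂ) i => (fun z : ℂ => dvec b k i * z) (a i) := rfl
  rw [this]
  apply MeasureTheory.volume_preserving_pi
  intro i
  show MeasurePreserving (fun z : ℂ => dvec b k i * z) volume volume
  by_cases h : b i = k
  · have : (fun z : ℂ => dvec b k i * z) = fun z : ℂ => -z := by
      funext z; simp [dvec, h]
    rw [this]
    exact Measure.measurePreserving_neg _
  · have : (fun z : ℂ => dvec b k i * z) = id := by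
      funext z; simp [dvec, h]
    rw [this]
    exact MeasurePreserving.id _

lemma BD.mulVec_flip {A : Matrix ι ι ℂ} (hA : BD b A) (k : κ) (ξ : ι → ℂ) :
    A *ᵥ (flip b k ξ) = flip b k (A *ᵥ ξ) := by
  funext i
  show ∑ j, A i j * (dvec b k j * ξ j) = dvec b k i * ∑ j, A i j * ξ j
  rw [Finset.mul_sum]
  refine Finset.sum_congr rfl fun j _ => ?_
  by_cases h : b i = b j
  · rw [dvec_eq_of_block (k := k) h]; ring
  · rw [hA i j h]; ring

lemma flip_dotProduct (k : κ) (ξ η : ι → ℂ) :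
    star (flip b k ξ) ⬝ᵥ flip b k η = star ξ ⬝ᵥ η := by
  refine Finset.sum_congr rfl fun i _ => ?_
  show star (dvec b k i * ξ i) * (dvec b k i * η i) = star (ξ i) * η i
  rw [star_mul', star_dvec]
  have h := dvec_mul_self (b := b) k i
  linear_combination (star (ξ i) * η i) * h

lemma BD.quadform_flip {A : Matrix ι ι ℂ} (hA : BD b A) (k : κ) (ξ : ι → ℂ) :
    star (flip b k ξ) ⬝ᵥ (A *ᵥ flip b k ξ) = star ξ ⬝ᵥ (A *ᵥ ξ) := by
  rw [hA.mulVec_flip, flip_dotProduct]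

/-! ### Reality and positivity facts -/

lemma quadform_real {A : Matrix ι ι ℂ} (hA : A.IsHermitian) (ξ : ι → ℂ) :
    star ξ ⬝ᵥ (A *ᵥ ξ) = ((star ξ ⬝ᵥ (A *ᵥ ξ)).re : ℂ) := by
  have hc : (starRingEnd ℂ) (star ξ ⬝ᵥ (A *ᵥ ξ)) = star ξ ⬝ᵥ (A *ᵥ ξ) := by
    have h1 : star (A *ᵥ ξ) ⬝ᵥ star (star ξ) = star (star ξ ⬝ᵥ (A *ᵥ ξ)) := star_dotProduct_star _ _
    replace h1 := h1.symm
    rw [star_star, star_mulVec] at h1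
    show star (star ξ ⬝ᵥ (A *ᵥ ξ)) = _
    rw [h1, ← Matrix.dotProduct_mulVec, hA.eq]
  exact ((Complex.conj_eq_iff_re).mp hc).symm

lemma det_eq_re {A : Matrix ι ι ℂ} (hA : A.PosDef) :
    A.det = (A.det.re : ℂ) ∧ 0 < A.det.re := by
  have h := hA.det_pos
  rw [Complex.lt_def] at h
  simp only [Complex.zero_re, Complex.zero_im] at h
  exact ⟨(Complex.ext rfl h.2.symm : A.det = (A.det.re : ℂ)), h.1⟩

lemma complex_nonneg_iff {z : ℂ} : 0 ≤ z ↔ 0 ≤ z.re ∧ z.im = 0 := by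
  rw [Complex.le_def]; simp [eq_comm]

/-- The `θ` denominator is a real number `≥ 1`. -/
lemma theta_denom {R S : Matrix ι ι ℂ} {ε : ℝ} (hR : R.PosDef) (hS : S.PosDef)
    (hε0 : 0 < ε) (hε1 : ε < 1) (ξ : ι → ℂ) :
    ∃ r : ℝ, 1 ≤ r ∧
      (1 + (((1 - ε) / ε : ℝ) : ℂ) * ((R + S).det / S.det) *
        Complex.exp (-(star ξ ⬝ᵥ ((S⁻¹ - (R + S)⁻¹) *ᵥ ξ)))) = (r : ℂ) := by
  have hRS : (R + S).PosDef := hR.add hS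
  have hΩ : (S⁻¹ - (R + S)⁻¹).IsHermitian := hS.inv.isHermitian.sub hRS.inv.isHermitian
  obtain ⟨hds, hds0⟩ := det_eq_re hS
  obtain ⟨hdrs, hdrs0⟩ := det_eq_re hRS
  have hq := quadform_real hΩ ξ
  set qr := (star ξ ⬝ᵥ ((S⁻¹ - (R + S)⁻¹) *ᵥ ξ)).re
  have hcoef : 0 ≤ ((1 - ε) / ε) * ((R + S).det.re / S.det.re) * Real.exp (-qr) := by
    have h1 : 0 ≤ (1 - ε) / ε := div_nonneg (by linarith) hε0.le
    have h2 : 0 ≤ (R + S).det.re / S.det.re := div_nonneg hdrs0.le hds0.le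
    positivity
  refine ⟨1 + ((1 - ε) / ε) * ((R + S).det.re / S.det.re) * Real.exp (-qr), by linarith, ?_⟩
  rw [hq, hds, hdrs, ← Complex.ofReal_neg, ← Complex.ofReal_exp]
  push_cast [Complex.ofReal_re]
  ring

/-- `θ` equals the inverse of a real number `≥ 1`. -/
lemma theta_eq {R S : Matrix ι ι ℂ} {ε : ℝ} (hR : R.PosDef) (hS : S.PosDef)
    (hε0 : 0 < ε) (hε1 : ε < 1) (ξ : ι → ℂ) :
    ∃ r : ℝ, 1 ≤ r ∧ mmseTheta R S ε ξ = ((r⁻¹ : ℝ) : ℂ) := by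
  obtain ⟨r, hr, h⟩ := theta_denom hR hS hε0 hε1 ξ
  exact ⟨r, hr, by rw [mmseTheta, h]; push_cast; rfl⟩

lemma norm_theta_le_one {R S : Matrix ι ι ℂ} {ε : ℝ} (hR : R.PosDef) (hS : S.PosDef)
    (hε0 : 0 < ε) (hε1 : ε < 1) (ξ : ι → ℂ) : ‖mmseTheta R S ε ξ‖ ≤ 1 := by
  obtain ⟨r, hr, h⟩ := theta_eq hR hS hε0 hε1 ξ
  rw [h, Complex.norm_real, Real.norm_eq_abs, abs_of_nonneg (by positivity)]
  rw [inv_le_one_iff₀]; right; exact hr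

/-! ### Continuity -/

lemma continuous_quadform (A : Matrix ι ι ℂ) :
    Continuous fun ξ : ι → ℂ => star ξ ⬝ᵥ (A *ᵥ ξ) := by
  apply continuous_finset_sum
  intro i _
  exact (continuous_star.comp (continuous_apply i)).mul
    (continuous_finset_sum _ fun j _ => continuous_const.mul (continuous_apply j))

lemma continuous_mulVec_apply (A : Matrix ι ι ℂ) (i : ι) :
    Continuous fun ξ : ι → ℂ => (A *ᵥ ξ) i :=
  continuous_finset_sum _ fun j _ => continuous_const.mul (continuous_apply j)

lemma continuous_theta {R S : Matrix ι ι ℂ} {ε : ℝ} (hR : R.PosDef) (hS : S.PosDef)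
    (hε0 : 0 < ε) (hε1 : ε < 1) : Continuous (mmseTheta R S ε) := by
  have hd : Continuous fun ξ : ι → ℂ =>
      (1 + (((1 - ε) / ε : ℝ) : ℂ) * ((R + S).det / S.det) *
        Complex.exp (-(star ξ ⬝ᵥ ((S⁻¹ - (R + S)⁻¹) *ᵥ ξ)))) :=
    continuous_const.add (continuous_const.mul
      (Complex.continuous_exp.comp (continuous_quadform _).neg))
  refine hd.inv₀ ?_
  intro ξ
  obtain ⟨r, hr, h⟩ := theta_denom hR hS hε0 hε1 ξ
  rw [h]
  exact_mod_cast (by norm_num; linarith : (r : ℂ) ≠ 0)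

lemma continuous_denoiser_apply {R S : Matrix ι ι ℂ} {ε : ℝ} (hR : R.PosDef) (hS : S.PosDef)
    (hε0 : 0 < ε) (hε1 : ε < 1) (i : ι) :
    Continuous fun ξ : ι → ℂ => mmseDenoiser R S ε ξ i := by
  unfold mmseDenoiser
  exact (continuous_theta hR hS hε0 hε1).mul (continuous_mulVec_apply _ i)

lemma continuous_gaussDensity_re (A : Matrix ι ι ℂ) :
    Continuous fun ξ : ι → ℂ => (gaussDensity A ξ).re := by
  apply Complex.continuous_re.comp
  unfold gaussDensity
  exact continuous_const.mul (Complex.continuous_exp.comp (continuous_quadform _).neg)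

/-! ### Flip invariance of the measures -/

variable {b : ι → κ}

lemma gaussDensity_flip {A : Matrix ι ι ℂ} (hA : BD b A) (hAu : IsUnit A.det) (k : κ)
    (ξ : ι → ℂ) : gaussDensity A (flip b k ξ) = gaussDensity A ξ := by
  unfold gaussDensity
  rw [(hA.inv hAu).quadform_flip]

lemma measurePreserving_flip_gauss {A : Matrix ι ι ℂ} (hA : BD b A) (hAu : IsUnit A.det)
    (k : κ) : MeasurePreserving (flip b k) (gaussMeasure A) (gaussMeasure A) := by
  refine ⟨measurable_flip k, ?_⟩
  have hg : Measurable fun ξ : ι → ℂ => ENNReal.ofReal (gaussDensity A ξ).re :=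
    (ENNReal.measurable_ofReal).comp (continuous_gaussDensity_re A).measurable
  unfold gaussMeasure
  ext s hs
  rw [Measure.map_apply (measurable_flip k) hs, withDensity_apply _ (measurable_flip k hs),
    withDensity_apply _ hs]
  have h1 : ∫⁻ ξ in s, ENNReal.ofReal (gaussDensity A ξ).re ∂volume
      = ∫⁻ ξ in s, ENNReal.ofReal (gaussDensity A ξ).re
        ∂(Measure.map (flip b k) volume) := by
    rw [(measurePreserving_flip k).map_eq]
  rw [h1, setLIntegral_map hs hg (measurable_flip k)]
  refine lintegral_congr_ae (ae_of_all _ fun ξ => ?_)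
  simpa using congrArg (fun t : ℂ => ENNReal.ofReal t.re) (gaussDensity_flip hA hAu k ξ).symm

lemma measurePreserving_flip_bg {A : Matrix ι ι ℂ} (hA : BD b A) (hAu : IsUnit A.det)
    {ε : ℝ} (k : κ) : MeasurePreserving (flip b k) (bgMeasure A ε) (bgMeasure A ε) := by
  refine ⟨measurable_flip k, ?_⟩
  unfold bgMeasure
  rw [Measure.map_add _ _ (measurable_flip k), Measure.map_smul, Measure.map_smul,
    Measure.map_dirac' (measurable_flip k), flip_zero,
    (measurePreserving_flip_gauss hA hAu k).map_eq]

/-! ### Equivariance of the denoiser -/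

lemma theta_flip {R S : Matrix ι ι ℂ} {ε : ℝ} (hR : BD b R) (hS : BD b S)
    (hSu : IsUnit S.det) (hRSu : IsUnit (R + S).det) (k : κ) (ξ : ι → ℂ) :
    mmseTheta R S ε (flip b k ξ) = mmseTheta R S ε ξ := by
  unfold mmseTheta
  rw [((hS.inv hSu).sub ((hR.add hS).inv hRSu)).quadform_flip]

lemma denoiser_flip {R S : Matrix ι ι ℂ} {ε : ℝ} (hR : BD b R) (hS : BD b S)
    (hSu : IsUnit S.det) (hRSu : IsUnit (R + S).det) (k : κ) (ξ : ι → ℂ) :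
    mmseDenoiser R S ε (flip b k ξ) = flip b k (mmseDenoiser R S ε ξ) := by
  unfold mmseDenoiser
  rw [theta_flip hR hS hSu hRSu, (hR.mul ((hR.add hS).inv hRSu)).mulVec_flip, flip_smul]

instance gaussMeasure.instSFinite {A : Matrix ι ι ℂ} : SFinite (gaussMeasure A) := by
  unfold gaussMeasure; infer_instance

instance bgMeasure.instSFinite {A : Matrix ι ι ℂ} {ε : ℝ} : SFinite (bgMeasure A ε) := by
  unfold bgMeasure; infer_instance

/-! ### Vanishing of off-block moments -/

lemma offblock_integral_zero {R S : Matrix ι ι ℂ} {ε : ℝ}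
    (hRbd : BD b R) (hSbd : BD b S) (hRu : IsUnit R.det) (hSu : IsUnit S.det)
    (hRSu : IsUnit (R + S).det) {i j : ι} (hij : b i ≠ b j) :
    ∫ p : (ι → ℂ) × (ι → ℂ),
      (mmseDenoiser R S ε (p.1 + p.2) i - p.1 i) *
        star (mmseDenoiser R S ε (p.1 + p.2) j - p.1 j)
      ∂((bgMeasure R ε).prod (gaussMeasure S)) = 0 := by
  set k := b i
  set f : (ι → ℂ) × (ι → ℂ) → ℂ := fun p =>
    (mmseDenoiser R S ε (p.1 + p.2) i - p.1 i) *
      star (mmseDenoiser R S ε (p.1 + p.2) j - p.1 j) with hf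
  set T : (ι → ℂ) × (ι → ℂ) → (ι → ℂ) × (ι → ℂ) :=
    fun p => (flip b k p.1, flip b k p.2) with hT
  have hmp : MeasurePreserving T ((bgMeasure R ε).prod (gaussMeasure S))
      ((bgMeasure R ε).prod (gaussMeasure S)) :=
    (measurePreserving_flip_bg hRbd hRu k).prod (measurePreserving_flip_gauss hSbd hSu k)
  have hemb : MeasurableEmbedding T := by
    have : T = fun p : (ι → ℂ) × (ι → ℂ) =>
        (MeasurableEquiv.prodCongr (flipEquiv b k) (flipEquiv b k)) p := rfl
    rw [this]
    exact (MeasurableEquiv.prodCongr (flipEquiv b k) (flipEquiv b k)).measurableEmbedding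
  have key : ∀ p, f (T p) = - f p := by
    intro p
    have h1 : flip b k p.1 + flip b k p.2 = flip b k (p.1 + p.2) := (flip_add k _ _).symm
    have hdi : dvec b k i = -1 := by unfold dvec; simp [k]
    have hdj : dvec b k j = 1 := by
      unfold dvec; rw [if_neg (fun e : b j = k => hij e.symm)]
    simp only [hf, hT]
    rw [h1, denoiser_flip hRbd hSbd hSu hRSu]
    simp only [flip, hdi, hdj, one_mul, neg_one_mul]
    ring
  have h2 := hmp.integral_comp hemb f
  rw [show (fun x => f (T x)) = fun x => - f x from funext key, integral_neg] at h2
  linear_combination (-1/2 : ℂ) * h2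

/-! ### Quadratic-form lower bound for positive definite matrices -/

/-- abbreviations -/
def sAbs (ξ : ι → ℂ) : ℝ := ∑ i, ‖ξ i‖
def nrm2 (ξ : ι → ℂ) : ℝ := ∑ i, ‖ξ i‖ ^ 2

lemma sAbs_nonneg (ξ : ι → ℂ) : 0 ≤ sAbs ξ :=
  Finset.sum_nonneg fun i _ => norm_nonneg _

lemma nrm2_nonneg (ξ : ι → ℂ) : 0 ≤ nrm2 ξ :=
  Finset.sum_nonneg fun i _ => by positivity

lemma continuous_nrm2 : Continuous (nrm2 (ι := ι)) :=
  continuous_finset_sum _ fun i _ => ((continuous_apply i).norm.pow 2)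

lemma continuous_sAbs : Continuous (sAbs (ι := ι)) :=
  continuous_finset_sum _ fun i _ => (continuous_apply i).norm

lemma sAbs_add_le (ξ η : ι → ℂ) : sAbs (ξ + η) ≤ sAbs ξ + sAbs η := by
  rw [sAbs, sAbs, sAbs, ← Finset.sum_add_distrib]
  exact Finset.sum_le_sum fun i _ => norm_add_le _ _

lemma norm_apply_le_sAbs (ξ : ι → ℂ) (i : ι) : ‖ξ i‖ ≤ sAbs ξ :=
  Finset.single_le_sum (fun j _ => norm_nonneg (ξ j)) (Finset.mem_univ i)

lemma sAbs_le_card_add_nrm2 (ξ : ι → ℂ) : sAbs ξ ≤ Fintype.card ι + nrm2 ξ := by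
  have : ∀ i : ι, ‖ξ i‖ ≤ 1 + ‖ξ i‖ ^ 2 := by
    intro i; nlinarith [norm_nonneg (ξ i), sq_nonneg (‖ξ i‖ - 1)]
  calc sAbs ξ ≤ ∑ i : ι, (1 + ‖ξ i‖ ^ 2) := Finset.sum_le_sum fun i _ => this i
  _ = Fintype.card ι + nrm2 ξ := by
    rw [Finset.sum_add_distrib, Finset.sum_const, Finset.card_univ, nsmul_eq_mul, mul_one, nrm2]

lemma quadform_smul_real (A : Matrix ι ι ℂ) (r : ℝ) (ξ : ι → ℂ) :
    star ((r : ℂ) • ξ) ⬝ᵥ (A *ᵥ ((r : ℂ) • ξ)) = ((r ^ 2 : ℝ) : ℂ) * (star ξ ⬝ᵥ (A *ᵥ ξ)) := by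
  rw [star_smul, Matrix.mulVec_smul, smul_dotProduct, dotProduct_smul]
  push_cast
  simp only [smul_eq_mul, Complex.star_def, Complex.conj_ofReal]
  ring

lemma nrm2_smul_real (r : ℝ) (ξ : ι → ℂ) : nrm2 ((r : ℂ) • ξ) = r ^ 2 * nrm2 ξ := by
  unfold nrm2
  rw [Finset.mul_sum]
  refine Finset.sum_congr rfl fun i _ => ?_
  simp [norm_mul, mul_pow, sq_abs]

lemma posdef_lower_bound {A : Matrix ι ι ℂ} (hA : A.PosDef) :
    ∃ lam : ℝ, 0 < lam ∧ ∀ ξ : ι → ℂ, lam * nrm2 ξ ≤ (star ξ ⬝ᵥ (A *ᵥ ξ)).re := by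
  rcases isEmpty_or_nonempty ι with hι | hι
  · refine ⟨1, one_pos, fun ξ => ?_⟩
    have h1 : nrm2 ξ = 0 := by rw [nrm2, Finset.univ_eq_empty, Finset.sum_empty]
    have h2 : star ξ ⬝ᵥ (A *ᵥ ξ) = 0 := by
      rw [dotProduct, Finset.univ_eq_empty, Finset.sum_empty]
    rw [h1, h2]; simp
  · set F : (ι → ℂ) → ℝ := fun ξ => (star ξ ⬝ᵥ (A *ᵥ ξ)).re with hF
    have hFc : Continuous F := Complex.continuous_re.comp (continuous_quadform A)
    set Sph : Set (ι → ℂ) := {ξ | nrm2 ξ = 1} with hSph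
    have hclosed : IsClosed Sph := isClosed_eq continuous_nrm2 continuous_const
    have hbdd : Bornology.IsBounded Sph := by
      refine (Metric.isBounded_closedBall (x := (0 : ι → ℂ)) (r := 1)).subset fun ξ hξ => ?_
      rw [Metric.mem_closedBall, dist_zero_right, pi_norm_le_iff_of_nonneg zero_le_one]
      intro i
      have h3 : nrm2 ξ = 1 := hξ
      have h1 : ‖ξ i‖ ^ 2 ≤ 1 := by
        have h2 := Finset.single_le_sum (f := fun j => ‖ξ j‖ ^ 2)
          (fun j _ => by positivity) (Finset.mem_univ i)
        rw [← nrm2, h3] at h2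
        exact h2
      nlinarith [norm_nonneg (ξ i)]
    have hcpt : IsCompact Sph := Metric.isCompact_of_isClosed_isBounded hclosed hbdd
    obtain ⟨i0⟩ := hι
    have hne : Sph.Nonempty := by
      refine ⟨Pi.single i0 1, ?_⟩
      show nrm2 _ = 1
      rw [nrm2, Finset.sum_eq_single i0]
      · simp
      · intro j _ hj; rw [Pi.single_eq_of_ne hj]; simp
      · intro h; exact absurd (Finset.mem_univ i0) h
    obtain ⟨m, hmS, hmin⟩ := hcpt.exists_isMinOn hne hFc.continuousOn
    have hm1 : nrm2 m = 1 := hmS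
    have hmne : m ≠ 0 := by
      intro h
      rw [h] at hm1
      have : nrm2 (0 : ι → ℂ) = 0 := by simp [nrm2]
      rw [this] at hm1
      norm_num at hm1
    have hFm : 0 < F m := by
      have h := hA.dotProduct_mulVec_pos hmne
      rw [Complex.lt_def] at h
      simpa using h.1
    refine ⟨F m, hFm, fun ξ => ?_⟩
    by_cases hz : ξ = 0
    · subst hz
      have h1 : nrm2 (0 : ι → ℂ) = 0 := by simp [nrm2]
      have h2 : F 0 = 0 := by simp [hF, dotProduct]
      rw [h1, mul_zero]
      simp [dotProduct]
    · have hnn : 0 < nrm2 ξ := by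
        obtain ⟨i, hi⟩ := Function.ne_iff.mp hz
        have h1 : 0 < ‖ξ i‖ ^ 2 := by
          have := norm_pos_iff.mpr hi
          positivity
        exact lt_of_lt_of_le h1 (Finset.single_le_sum (f := fun j => ‖ξ j‖ ^ 2)
          (fun j _ => by positivity) (Finset.mem_univ i))
      set r := Real.sqrt (nrm2 ξ) with hrdef
      have hr : 0 < r := Real.sqrt_pos.mpr hnn
      have hr2 : r ^ 2 = nrm2 ξ := Real.sq_sqrt hnn.le
      set ξ' := ((r⁻¹ : ℝ) : ℂ) • ξ with hξ'def
      have hmem : ξ' ∈ Sph := by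
        show nrm2 ξ' = 1
        rw [hξ'def, nrm2_smul_real, ← hr2]
        field_simp
      have h4 : F m ≤ F ξ' := hmin hmem
      have h5 : F ξ' = (r⁻¹) ^ 2 * F ξ := by
        rw [hF]
        simp only [hξ'def, quadform_smul_real]
        rw [Complex.re_ofReal_mul]
      rw [h5] at h4
      have h6 : F m * r ^ 2 ≤ F ξ := by
        have := mul_le_mul_of_nonneg_right h4 (le_of_lt (by positivity : (0:ℝ) < r ^ 2))
        calc F m * r ^ 2 ≤ (r⁻¹) ^ 2 * F ξ * r ^ 2 := this
        _ = F ξ := by field_simp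
      rw [← hr2]
      linarith

/-! ### Gaussian integrability -/

lemma integrable_gauss_coord {c : ℝ} (hc : 0 < c) :
    Integrable (fun z : ℂ => Real.exp (-c * ‖z‖ ^ 2)) volume := by
  have h := GaussianFourier.integrable_cexp_neg_mul_sq_norm_add (V := ℂ)
    (b := (c : ℂ)) (by simpa using hc) 0 0
  have h2 := h.norm
  refine h2.congr ?_
  refine ae_of_all _ fun z => ?_
  show ‖Complex.exp _‖ = _
  rw [Complex.norm_exp]
  congr 1
  rw [show (-(c:ℂ) * (‖z‖:ℂ) ^ 2 + 0 * ((inner ℝ (0:ℂ) z : ℝ) : ℂ)) = ((-c * ‖z‖ ^ 2 : ℝ) : ℂ)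
    by push_cast; ring, Complex.ofReal_re]

lemma integrable_exp_nrm2 {c : ℝ} (hc : 0 < c) :
    Integrable (fun ξ : ι → ℂ => Real.exp (-c * nrm2 ξ)) volume := by
  have h : (fun ξ : ι → ℂ => Real.exp (-c * nrm2 ξ))
      = fun ξ : ι → ℂ => ∏ i, Real.exp (-c * ‖ξ i‖ ^ 2) := by
    funext ξ
    rw [← Real.exp_sum, nrm2, Finset.mul_sum]
  rw [h]
  exact Integrable.fintype_prod (f := fun _ (z : ℂ) => Real.exp (-c * ‖z‖ ^ 2))
    (fun i => integrable_gauss_coord hc)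

lemma sq_le_exp {c : ℝ} (u : ℝ) (hc : 0 < c) (hu : 0 ≤ u) :
    u ^ 2 ≤ 4 / c ^ 2 * Real.exp (c * u) := by
  have h1 : c * u / 2 + 1 ≤ Real.exp (c * u / 2) := Real.add_one_le_exp _
  have h2 : Real.exp (c * u / 2) * Real.exp (c * u / 2) = Real.exp (c * u) := by
    rw [← Real.exp_add]; ring_nf
  have h3 : (0:ℝ) < Real.exp (c * u / 2) := Real.exp_pos _
  have h4 : u ≤ 2 / c * Real.exp (c * u / 2) := by
    rw [div_mul_eq_mul_div, le_div_iff₀ hc]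
    nlinarith
  have h5 : 0 ≤ 2 / c * Real.exp (c * u / 2) := by positivity
  calc u ^ 2 ≤ (2 / c * Real.exp (c * u / 2)) ^ 2 := by nlinarith
  _ = 4 / c ^ 2 * Real.exp (c * u) := by
      rw [mul_pow, ← h2]; ring_nf
  
lemma gaussDensity_re_eq {A : Matrix ι ι ℂ} (hA : A.PosDef) :
    ∃ Cd : ℝ, 0 < Cd ∧ ∀ ξ : ι → ℂ,
      (gaussDensity A ξ).re = Cd * Real.exp (-(star ξ ⬝ᵥ (A⁻¹ *ᵥ ξ)).re) := by
  obtain ⟨hdet, hdet0⟩ := det_eq_re hA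
  refine ⟨(Real.pi ^ Fintype.card ι)⁻¹ * (A.det.re)⁻¹, by positivity, fun ξ => ?_⟩
  have hq := quadform_real hA.inv.isHermitian ξ
  unfold gaussDensity
  rw [hq, hdet, ← Complex.ofReal_neg, ← Complex.ofReal_exp, ← Complex.ofReal_pow,
    ← Complex.ofReal_inv, ← Complex.ofReal_inv, ← Complex.ofReal_mul, ← Complex.ofReal_mul,
    Complex.ofReal_re]
  simp

lemma integrable_poly_gauss {A : Matrix ι ι ℂ} (hA : A.PosDef) :
    Integrable (fun ξ : ι → ℂ => (1 + sAbs ξ) ^ 2 * (gaussDensity A ξ).re) volume := by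
  obtain ⟨lam, hlam, hlb⟩ := posdef_lower_bound hA.inv
  obtain ⟨Cd, hCd, hre⟩ := gaussDensity_re_eq hA
  set a : ℝ := 1 + Fintype.card ι with ha
  have ha0 : (0:ℝ) < a := by positivity
  set Cm : ℝ := (2 * a ^ 2 + 2 * (4 / (lam / 2) ^ 2)) * Cd with hCm
  have hbound : ∀ ξ : ι → ℂ, (1 + sAbs ξ) ^ 2 * (gaussDensity A ξ).re
      ≤ Cm * Real.exp (-(lam / 2) * nrm2 ξ) := by
    intro ξ
    set u := nrm2 ξ with hu
    have hu0 : 0 ≤ u := nrm2_nonneg ξ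
    have hs0 : 0 ≤ sAbs ξ := sAbs_nonneg ξ
    have hsle : sAbs ξ ≤ Fintype.card ι + u := sAbs_le_card_add_nrm2 ξ
    have hqr : lam * u ≤ (star ξ ⬝ᵥ (A⁻¹ *ᵥ ξ)).re := hlb ξ
    have e1 : Real.exp (-(star ξ ⬝ᵥ (A⁻¹ *ᵥ ξ)).re) ≤ Real.exp (-(lam * u)) :=
      Real.exp_le_exp.mpr (by linarith)
    have e3 : u ^ 2 ≤ 4 / (lam / 2) ^ 2 * Real.exp (lam / 2 * u) :=
      sq_le_exp u (by linarith) hu0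
    have e4 : Real.exp (lam / 2 * u) * Real.exp (-(lam * u)) = Real.exp (-(lam / 2) * u) := by
      rw [← Real.exp_add]; ring_nf
    have e5 : Real.exp (-(lam * u)) ≤ Real.exp (-(lam / 2) * u) :=
      Real.exp_le_exp.mpr (by nlinarith [mul_nonneg hlam.le hu0])
    have h6 : 1 + sAbs ξ ≤ a + u := by rw [ha]; linarith
    have h5 : (1 + sAbs ξ) ^ 2 ≤ 2 * a ^ 2 + 2 * u ^ 2 := by
      have h7 : (1 + sAbs ξ) ^ 2 ≤ (a + u) ^ 2 := by nlinarith
      nlinarith [sq_nonneg (a - u)]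
    have hd := hre ξ
    rw [hd]
    have hexp0 : (0:ℝ) < Real.exp (-(star ξ ⬝ᵥ (A⁻¹ *ᵥ ξ)).re) := Real.exp_pos _
    calc (1 + sAbs ξ) ^ 2 * (Cd * Real.exp (-(star ξ ⬝ᵥ (A⁻¹ *ᵥ ξ)).re))
        ≤ (2 * a ^ 2 + 2 * u ^ 2) * (Cd * Real.exp (-(lam * u))) := by
          apply mul_le_mul h5 (mul_le_mul_of_nonneg_left e1 hCd.le) (by positivity) (by positivity)
    _ ≤ Cm * Real.exp (-(lam / 2) * u) := by
          rw [hCm]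
          have e6 : u ^ 2 * Real.exp (-(lam * u))
              ≤ 4 / (lam / 2) ^ 2 * Real.exp (-(lam / 2) * u) := by
            calc u ^ 2 * Real.exp (-(lam * u))
                ≤ (4 / (lam / 2) ^ 2 * Real.exp (lam / 2 * u)) * Real.exp (-(lam * u)) :=
                  mul_le_mul_of_nonneg_right e3 (Real.exp_pos _).le
            _ = 4 / (lam / 2) ^ 2 * Real.exp (-(lam / 2) * u) := by rw [mul_assoc, e4]
          nlinarith [mul_le_mul_of_nonneg_left e6 (by positivity : (0:ℝ) ≤ 2 * Cd),
            mul_le_mul_of_nonneg_left e5 (by positivity : (0:ℝ) ≤ 2 * a ^ 2 * Cd)]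
  have hint : Integrable (fun ξ : ι → ℂ => Cm * Real.exp (-(lam / 2) * nrm2 ξ)) volume :=
    (integrable_exp_nrm2 (by linarith)).const_mul Cm
  refine hint.mono' ?_ (ae_of_all _ fun ξ => ?_)
  · exact (((continuous_const.add continuous_sAbs).pow 2).mul
      (continuous_gaussDensity_re A)).aestronglyMeasurable
  · have h0 : 0 ≤ (1 + sAbs ξ) ^ 2 * (gaussDensity A ξ).re := by
      have := hre ξ
      have hs0 := sAbs_nonneg ξ
      rw [this]
      positivity
    rw [Real.norm_eq_abs, abs_of_nonneg h0]
    exact hbound ξ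

lemma gaussDensity_re_nonneg {A : Matrix ι ι ℂ} (hA : A.PosDef) (ξ : ι → ℂ) :
    0 ≤ (gaussDensity A ξ).re := by
  obtain ⟨Cd, hCd, hre⟩ := gaussDensity_re_eq hA
  rw [hre]; positivity

lemma integrable_gaussDensity_re {A : Matrix ι ι ℂ} (hA : A.PosDef) :
    Integrable (fun ξ : ι → ℂ => (gaussDensity A ξ).re) volume := by
  refine (integrable_poly_gauss hA).mono'
    (continuous_gaussDensity_re A).aestronglyMeasurable (ae_of_all _ fun ξ => ?_)
  have h0 := gaussDensity_re_nonneg hA ξ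
  have hs := sAbs_nonneg ξ
  rw [Real.norm_eq_abs, abs_of_nonneg h0]
  nlinarith [mul_nonneg hs h0, mul_nonneg (mul_nonneg hs hs) h0]

lemma gauss_isFiniteMeasure {A : Matrix ι ι ℂ} (hA : A.PosDef) :
    IsFiniteMeasure (gaussMeasure A) :=
  isFiniteMeasure_withDensity_ofReal (integrable_gaussDensity_re hA).hasFiniteIntegral

lemma integrable_moment_gauss {A : Matrix ι ι ℂ} (hA : A.PosDef) :
    Integrable (fun ξ : ι → ℂ => (1 + sAbs ξ) ^ 2) (gaussMeasure A) := by
  have hmeas : Measurable fun ξ : ι → ℂ => ENNReal.ofReal (gaussDensity A ξ).re :=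
    ENNReal.measurable_ofReal.comp (continuous_gaussDensity_re A).measurable
  rw [gaussMeasure, integrable_withDensity_iff hmeas
    (ae_of_all _ fun _ => ENNReal.ofReal_lt_top)]
  refine (integrable_poly_gauss hA).congr (ae_of_all _ fun ξ => ?_)
  show _ = (1 + sAbs ξ) ^ 2 * (ENNReal.ofReal (gaussDensity A ξ).re).toReal
  rw [ENNReal.toReal_ofReal (gaussDensity_re_nonneg hA ξ)]

lemma integrable_moment_bg {A : Matrix ι ι ℂ} (hA : A.PosDef) (ε : ℝ) :
    Integrable (fun ξ : ι → ℂ => (1 + sAbs ξ) ^ 2) (bgMeasure A ε) := by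
  unfold bgMeasure
  have hcont : Continuous fun ξ : ι → ℂ => (1 + sAbs ξ) ^ 2 :=
    (continuous_const.add continuous_sAbs).pow 2
  refine Integrable.add_measure ?_ ?_
  · refine Integrable.smul_measure ?_ ENNReal.ofReal_ne_top
    refine ⟨hcont.aestronglyMeasurable, ?_⟩
    unfold HasFiniteIntegral
    rw [lintegral_dirac' _ hcont.measurable.enorm]
    exact enorm_lt_top
  · exact (integrable_moment_gauss hA).smul_measure ENNReal.ofReal_ne_top

/-! ### The integrand is integrable -/

lemma denoiser_norm_le {R S : Matrix ι ι ℂ} {ε : ℝ} (hR : R.PosDef) (hS : S.PosDef)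
    (hε0 : 0 < ε) (hε1 : ε < 1) :
    ∃ T : ℝ, 0 ≤ T ∧ ∀ (ξ : ι → ℂ) (i : ι), ‖mmseDenoiser R S ε ξ i‖ ≤ T * sAbs ξ := by
  set B := R * (R + S)⁻¹ with hB
  set T : ℝ := ∑ p, ∑ q, ‖B p q‖ with hT
  have hT0 : 0 ≤ T := Finset.sum_nonneg fun p _ => Finset.sum_nonneg fun q _ => norm_nonneg _
  refine ⟨T, hT0, fun ξ i => ?_⟩
  have hθ := norm_theta_le_one hR hS hε0 hε1 ξ
  have h1 : mmseDenoiser R S ε ξ i = mmseTheta R S ε ξ * (B *ᵥ ξ) i := rfl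
  rw [h1, norm_mul]
  have hentry : ∀ l, ‖B i l‖ ≤ T := by
    intro l
    have e1 : ‖B i l‖ ≤ ∑ q, ‖B i q‖ :=
      Finset.single_le_sum (f := fun q => ‖B i q‖) (fun q _ => norm_nonneg _)
        (Finset.mem_univ l)
    have e2 : ∑ q, ‖B i q‖ ≤ T :=
      Finset.single_le_sum (f := fun p => ∑ q, ‖B p q‖)
        (fun p _ => Finset.sum_nonneg fun q _ => norm_nonneg _) (Finset.mem_univ i)
    linarith
  have h2 : ‖(B *ᵥ ξ) i‖ ≤ T * sAbs ξ := by
    calc ‖(B *ᵥ ξ) i‖ ≤ ∑ l, ‖B i l * ξ l‖ := norm_sum_le _ _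
    _ = ∑ l, ‖B i l‖ * ‖ξ l‖ := by simp [norm_mul]
    _ ≤ ∑ l, T * ‖ξ l‖ := Finset.sum_le_sum fun l _ =>
        mul_le_mul_of_nonneg_right (hentry l) (norm_nonneg _)
    _ = T * sAbs ξ := by rw [sAbs, Finset.mul_sum]
  calc ‖mmseTheta R S ε ξ‖ * ‖(B *ᵥ ξ) i‖ ≤ 1 * (T * sAbs ξ) :=
    mul_le_mul hθ h2 (norm_nonneg _) zero_le_one
  _ = T * sAbs ξ := one_mul _

lemma integrand_integrable {R S : Matrix ι ι ℂ} {ε : ℝ} (hR : R.PosDef) (hS : S.PosDef)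
    (hε0 : 0 < ε) (hε1 : ε < 1) (i j : ι) :
    Integrable (fun p : (ι → ℂ) × (ι → ℂ) =>
      (mmseDenoiser R S ε (p.1 + p.2) i - p.1 i) *
        star (mmseDenoiser R S ε (p.1 + p.2) j - p.1 j))
      ((bgMeasure R ε).prod (gaussMeasure S)) := by
  obtain ⟨T, hT, hTb⟩ := denoiser_norm_le hR hS hε0 hε1
  set C : ℝ := T + 1 with hC
  have hC0 : 0 ≤ C := by linarith
  have hub : ∀ (p : (ι → ℂ) × (ι → ℂ)) (l : ι),
      ‖mmseDenoiser R S ε (p.1 + p.2) l - p.1 l‖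
        ≤ C * ((1 + sAbs p.1) * (1 + sAbs p.2)) := by
    intro p l
    have h1 : ‖mmseDenoiser R S ε (p.1 + p.2) l - p.1 l‖
        ≤ ‖mmseDenoiser R S ε (p.1 + p.2) l‖ + ‖p.1 l‖ := norm_sub_le _ _
    have h2 := hTb (p.1 + p.2) l
    have h3 := sAbs_add_le p.1 p.2
    have h4 := norm_apply_le_sAbs p.1 l
    have hs1 := sAbs_nonneg p.1
    have hs2 := sAbs_nonneg p.2
    have h5 : T * sAbs (p.1 + p.2) ≤ T * (sAbs p.1 + sAbs p.2) :=
      mul_le_mul_of_nonneg_left h3 hT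
    nlinarith [mul_nonneg hT (mul_nonneg hs1 hs2), mul_nonneg hs1 hs2,
      mul_nonneg hT hs1, mul_nonneg hT hs2]
  have hintb : Integrable (fun p : (ι → ℂ) × (ι → ℂ) =>
      (C ^ 2 * (1 + sAbs p.1) ^ 2) * ((1 + sAbs p.2) ^ 2))
      ((bgMeasure R ε).prod (gaussMeasure S)) :=
    ((integrable_moment_bg hR ε).const_mul (C ^ 2)).mul_prod (integrable_moment_gauss hS)
  refine hintb.mono' ?_ (ae_of_all _ fun p => ?_)
  · have hc1 : Continuous fun p : (ι → ℂ) × (ι → ℂ) => p.1 + p.2 :=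
      continuous_fst.add continuous_snd
    have hGi := (continuous_denoiser_apply hR hS hε0 hε1 i).comp hc1
    have hGj := (continuous_denoiser_apply hR hS hε0 hε1 j).comp hc1
    exact ((hGi.sub ((continuous_apply i).comp continuous_fst)).mul
      (continuous_star.comp
        (hGj.sub ((continuous_apply j).comp continuous_fst)))).aestronglyMeasurable
  · rw [norm_mul, norm_star]
    calc ‖mmseDenoiser R S ε (p.1 + p.2) i - p.1 i‖ *
          ‖mmseDenoiser R S ε (p.1 + p.2) j - p.1 j‖
        ≤ (C * ((1 + sAbs p.1) * (1 + sAbs p.2))) *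
          (C * ((1 + sAbs p.1) * (1 + sAbs p.2))) :=
          mul_le_mul (hub p i) (hub p j) (norm_nonneg _)
            (mul_nonneg hC0 (mul_nonneg
              (by linarith [sAbs_nonneg p.1]) (by linarith [sAbs_nonneg p.2])))
    _ = C ^ 2 * (1 + sAbs p.1) ^ 2 * (1 + sAbs p.2) ^ 2 := by ring

/-! ### The moment matrix is positive semidefinite -/

lemma quad_eq_ofReal_integral {μ : Measure ((ι → ℂ) × (ι → ℂ))}
    (u : ((ι → ℂ) × (ι → ℂ)) → ι → ℂ)
    (hInt : ∀ i j, Integrable (fun p => u p i * star (u p j)) μ) (c : ι → ℂ) :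
    star c ⬝ᵥ ((Matrix.of fun i j => ∫ p, u p i * star (u p j) ∂μ) *ᵥ c)
      = ((∫ p, Complex.normSq (∑ l, star (c l) * u p l) ∂μ : ℝ) : ℂ) := by
  have hIntRow : ∀ i, Integrable (fun p => ∑ j, u p i * star (u p j) * c j) μ := by
    intro i
    exact integrable_finset_sum _ fun j _ => (hInt i j).mul_const (c j)
  have step1 : ∀ i, ((Matrix.of fun i j => ∫ p, u p i * star (u p j) ∂μ) *ᵥ c) i
      = ∫ p, ∑ j, u p i * star (u p j) * c j ∂μ := by
    intro i
    show ∑ j, (∫ p, u p i * star (u p j) ∂μ) * c j = _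
    calc ∑ j, (∫ p, u p i * star (u p j) ∂μ) * c j
        = ∑ j, ∫ p, u p i * star (u p j) * c j ∂μ := by
          refine Finset.sum_congr rfl fun j _ => ?_
          rw [← integral_mul_const]
    _ = ∫ p, ∑ j, u p i * star (u p j) * c j ∂μ :=
          (integral_finset_sum _ (fun j _ => (hInt i j).mul_const (c j))).symm
  have step2 : star c ⬝ᵥ ((Matrix.of fun i j => ∫ p, u p i * star (u p j) ∂μ) *ᵥ c)
      = ∫ p, (∑ i, star (c i) * u p i) * (∑ j, star (u p j) * c j) ∂μ := by
    show ∑ i, star (c i) * ((Matrix.of fun i j => ∫ p, u p i * star (u p j) ∂μ) *ᵥ c) i = _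
    calc ∑ i, star (c i) * ((Matrix.of fun i j => ∫ p, u p i * star (u p j) ∂μ) *ᵥ c) i
        = ∑ i, ∫ p, star (c i) * ∑ j, u p i * star (u p j) * c j ∂μ := by
          refine Finset.sum_congr rfl fun i _ => ?_
          rw [step1 i, ← integral_const_mul]
    _ = ∫ p, ∑ i, star (c i) * ∑ j, u p i * star (u p j) * c j ∂μ :=
          (integral_finset_sum _ fun i _ => (hIntRow i).const_mul _).symm
    _ = ∫ p, (∑ i, star (c i) * u p i) * (∑ j, star (u p j) * c j) ∂μ := by
          refine integral_congr_ae (ae_of_all _ fun p => ?_)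
          show ∑ i, star (c i) * ∑ j, u p i * star (u p j) * c j
            = (∑ i, star (c i) * u p i) * ∑ j, star (u p j) * c j
          rw [Finset.sum_mul]
          refine Finset.sum_congr rfl fun i _ => ?_
          rw [Finset.mul_sum, Finset.mul_sum]
          refine Finset.sum_congr rfl fun j _ => by ring
  rw [step2]
  have hcoe : ((∫ p, Complex.normSq (∑ l, star (c l) * u p l) ∂μ : ℝ) : ℂ)
      = ∫ p, ((Complex.normSq (∑ l, star (c l) * u p l) : ℝ) : ℂ) ∂μ :=
    (integral_ofReal (𝕜 := ℂ)).symm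
  rw [hcoe]
  refine integral_congr_ae (ae_of_all _ fun p => ?_)
  show (∑ i, star (c i) * u p i) * (∑ j, star (u p j) * c j)
      = ((Complex.normSq (∑ l, star (c l) * u p l) : ℝ) : ℂ)
  have hz : (∑ j, star (u p j) * c j) = star (∑ l, star (c l) * u p l) := by
    rw [star_sum]
    refine Finset.sum_congr rfl fun j _ => ?_
    rw [star_mul', star_star]
    ring
  rw [hz, ← Complex.mul_conj]
  rfl

lemma moment_posSemidef {μ : Measure ((ι → ℂ) × (ι → ℂ))}
    (u : ((ι → ℂ) × (ι → ℂ)) → ι → ℂ)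
    (hInt : ∀ i j, Integrable (fun p => u p i * star (u p j)) μ) :
    (Matrix.of fun i j => ∫ p, u p i * star (u p j) ∂μ).PosSemidef := by
  refine Matrix.PosSemidef.of_dotProduct_mulVec_nonneg ?_ ?_
  · ext i j
    show star (∫ p, u p j * star (u p i) ∂μ) = ∫ p, u p i * star (u p j) ∂μ
    rw [show (star (∫ p, u p j * star (u p i) ∂μ) : ℂ)
        = (starRingEnd ℂ) (∫ p, u p j * star (u p i) ∂μ) from rfl]
    rw [← integral_conj]
    refine integral_congr_ae (ae_of_all _ fun p => ?_)
    have h2 : (starRingEnd ℂ) (u p j * star (u p i)) = star (u p j * star (u p i)) := rfl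
    show (starRingEnd ℂ) (u p j * star (u p i)) = u p i * star (u p j)
    rw [h2, star_mul', star_star]
    ring
  · intro c
    rw [quad_eq_ofReal_integral u hInt c, complex_nonneg_iff]
    constructor
    · rw [Complex.ofReal_re]
      exact integral_nonneg fun p => Complex.normSq_nonneg _
    · rw [Complex.ofReal_im]

/-! ### Positive definiteness helpers -/

lemma posdef_real_smul_one {r : ℝ} (hr : 0 < r) : (((r : ℂ)) • (1 : Matrix ι ι ℂ)).PosDef := by
  have h : ((r : ℂ)) • (1 : Matrix ι ι ℂ) = Matrix.diagonal (fun _ => (r : ℂ)) := by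
    ext i j
    by_cases hij : i = j
    · subst hij; simp
    · simp [Matrix.one_apply_ne hij, Matrix.diagonal_apply_ne _ hij]
  rw [h]
  exact Matrix.PosDef.diagonal fun i => by
    rw [Complex.lt_def]; simp [hr]

lemma posSemidef_ofReal_smul {r : ℝ} (hr : 0 ≤ r) {A : Matrix ι ι ℂ} (hA : A.PosSemidef) :
    (((r : ℂ)) • A).PosSemidef := by
  refine Matrix.PosSemidef.of_dotProduct_mulVec_nonneg ?_ ?_
  · show (((r : ℂ)) • A)ᴴ = _
    rw [Matrix.conjTranspose_smul, hA.1.eq]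
    congr 1
    exact Complex.conj_ofReal r
  · intro x
    rw [Matrix.smul_mulVec, dotProduct_smul]
    have hq := hA.dotProduct_mulVec_nonneg x
    rw [complex_nonneg_iff] at hq ⊢
    rw [smul_eq_mul]
    constructor
    · rw [Complex.re_ofReal_mul]
      exact mul_nonneg hr hq.1
    · rw [Complex.im_ofReal_mul, hq.2, mul_zero]

lemma posSemidef_sum {α : Type*} {s : Finset α} {f : α → Matrix ι ι ℂ}
    (h : ∀ a ∈ s, (f a).PosSemidef) : (∑ a ∈ s, f a).PosSemidef :=
  Finset.sum_induction f _ (fun _ _ ha hb => ha.add hb) Matrix.PosSemidef.zero h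

end SE

/-- **Theorem 1.** If `σ² > 0`, `L > 0`, `εₙ ∈ (0,1)` and each `Rₙ` is
Hermitian positive definite and block-diagonal (w.r.t. the `K` consecutive blocks of size
`M`), then for every `t` the state `Σᵗ` is well defined (all defining integrands are
integrable), Hermitian positive definite, and block-diagonal. -/
theorem stmt1 (K M N : ℕ) (σ2 L : ℝ) (hσ2 : 0 < σ2) (hL : 0 < L)
    (ε : Fin N → ℝ) (hε : ∀ n, 0 < ε n ∧ ε n < 1)
    (R : Fin N → Matrix (Fin K × Fin M) (Fin K × Fin M) ℂ)
    (hRpd : ∀ n, (R n).PosDef)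
    (hRbd : ∀ n, ∀ i j : Fin K × Fin M, i.1 ≠ j.1 → R n i j = 0) :
    ∀ t : ℕ,
      (∀ n : Fin N, ∀ i j : Fin K × Fin M,
        Integrable
          (fun p : ((Fin K × Fin M) → ℂ) × ((Fin K × Fin M) → ℂ) =>
            (mmseDenoiser (R n) (stateSeq σ2 L ε R t) (ε n) (p.1 + p.2) i - p.1 i) *
              star (mmseDenoiser (R n) (stateSeq σ2 L ε R t) (ε n) (p.1 + p.2) j - p.1 j))
          ((bgMeasure (R n) (ε n)).prod (gaussMeasure (stateSeq σ2 L ε R t)))) ∧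
      (stateSeq σ2 L ε R t).PosDef ∧
      (∀ i j : Fin K × Fin M, i.1 ≠ j.1 → stateSeq σ2 L ε R t i j = 0) := by
  have hsmul : ((1:ℂ)/(L:ℂ)) = (((1/L : ℝ)) : ℂ) := by push_cast; ring
  have hmain : ∀ t : ℕ, (stateSeq σ2 L ε R t).PosDef ∧
      SE.BD Prod.fst (stateSeq σ2 L ε R t) := by
    intro t
    induction t with
    | zero =>
      constructor
      · show ((σ2 : ℂ) • (1 : Matrix (Fin K × Fin M) (Fin K × Fin M) ℂ)
            + ((1:ℂ)/(L:ℂ)) • ∑ n, R n).PosDef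
        refine (SE.posdef_real_smul_one hσ2).add_posSemidef ?_
        rw [hsmul]
        exact SE.posSemidef_ofReal_smul (by positivity)
          (SE.posSemidef_sum fun n _ => (hRpd n).posSemidef)
      · show SE.BD Prod.fst ((σ2 : ℂ) • (1 : Matrix (Fin K × Fin M) (Fin K × Fin M) ℂ)
            + ((1:ℂ)/(L:ℂ)) • ∑ n, R n)
        exact (SE.BD.smul _ SE.BD.one).add
          (SE.BD.smul _ (SE.BD.sum fun n _ => fun i j h => hRbd n i j h))
    | succ t ih =>
      obtain ⟨hSpd, hSbd⟩ := ih
      have hInt : ∀ (n : Fin N) (i j : Fin K × Fin M),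
          Integrable (fun p : ((Fin K × Fin M) → ℂ) × ((Fin K × Fin M) → ℂ) =>
            (mmseDenoiser (R n) (stateSeq σ2 L ε R t) (ε n) (p.1 + p.2) i - p.1 i) *
              star (mmseDenoiser (R n) (stateSeq σ2 L ε R t) (ε n) (p.1 + p.2) j - p.1 j))
            ((bgMeasure (R n) (ε n)).prod (gaussMeasure (stateSeq σ2 L ε R t))) :=
        fun n i j => SE.integrand_integrable (hRpd n) hSpd (hε n).1 (hε n).2 i j
      constructor
      · show ((σ2 : ℂ) • (1 : Matrix (Fin K × Fin M) (Fin K × Fin M) ℂ)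
            + ((1:ℂ)/(L:ℂ)) • ∑ n, Matrix.of (fun i j =>
              ∫ p : ((Fin K × Fin M) → ℂ) × ((Fin K × Fin M) → ℂ),
                (mmseDenoiser (R n) (stateSeq σ2 L ε R t) (ε n) (p.1 + p.2) i - p.1 i) *
                  star (mmseDenoiser (R n) (stateSeq σ2 L ε R t) (ε n) (p.1 + p.2) j - p.1 j)
                ∂((bgMeasure (R n) (ε n)).prod
                  (gaussMeasure (stateSeq σ2 L ε R t))))).PosDef
        refine (SE.posdef_real_smul_one hσ2).add_posSemidef ?_
        rw [hsmul]
        refine SE.posSemidef_ofReal_smul (by positivity)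
          (SE.posSemidef_sum fun n _ => ?_)
        exact SE.moment_posSemidef
          (fun p l => mmseDenoiser (R n) (stateSeq σ2 L ε R t) (ε n) (p.1 + p.2) l - p.1 l)
          (hInt n)
      · show SE.BD Prod.fst ((σ2 : ℂ) • (1 : Matrix (Fin K × Fin M) (Fin K × Fin M) ℂ)
            + ((1:ℂ)/(L:ℂ)) • ∑ n, Matrix.of (fun i j =>
              ∫ p : ((Fin K × Fin M) → ℂ) × ((Fin K × Fin M) → ℂ),
                (mmseDenoiser (R n) (stateSeq σ2 L ε R t) (ε n) (p.1 + p.2) i - p.1 i) *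
                  star (mmseDenoiser (R n) (stateSeq σ2 L ε R t) (ε n) (p.1 + p.2) j - p.1 j)
                ∂((bgMeasure (R n) (ε n)).prod
                  (gaussMeasure (stateSeq σ2 L ε R t)))))
        refine (SE.BD.smul _ SE.BD.one).add (SE.BD.smul _ (SE.BD.sum fun n _ => ?_))
        intro i j hij
        exact SE.offblock_integral_zero (fun a b h => hRbd n a b h) hSbd
          ((hRpd n).det_pos.ne'.isUnit) (hSpd.det_pos.ne'.isUnit)
          (((hRpd n).add hSpd).det_pos.ne'.isUnit) hij
  intro t
  exact ⟨fun n i j => SE.integrand_integrable (hRpd n) (hmain t).1 (hε n).1 (hε n).2 i j,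
    (hmain t).1, fun i j h => (hmain t).2 i j h⟩

end
end

section
/- In the setting of the state-evolution sequence Σ^t (with σ² > 0, ε_n ∈ (0,1), L > 0, and MMSE denoisers g_n^t), assume additionally that each covariance has the form R_n = bdiag(ρ_{1n}·I_M, …, ρ_{Kn}·I_M) with scalars ρ_{kn} > 0. Then for every t ≥ 0 there exist scalars τ_1^t, …, τ_K^t > 0 such that Σ^t = bdiag(τ_1^t·I_M, …, τ_K^t·I_M), i.e., each diagonal block of the state is a positive scalar multiple of the M×M identity. -/
open MeasureTheory Matrix
open scoped ComplexOrder

noncomputable section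

/-! When every `Rₙ` and `Σᵗ` is diagonal and constant on each block, the law of `(xₙ, vᵗ)` and
the denoiser `gₙᵗ` are equivariant under every signed permutation of coordinates that maps each
block to itself: such a map preserves Lebesgue measure and the block-constant diagonal quadratic
forms in the densities and in `θ`. So the `(i, j)` entry of the error covariance picks up the
factor `uᵢ uⱼ`; a sign flip at `i` shows it vanishes for `i ≠ j`, and a transposition within a
block shows the diagonal is constant on blocks. Its diagonal entries are nonnegative, so `Σᵗ⁺¹`
is again block-scalar with positive scalars. No integrability is needed: the change of variables
holds for the Bochner integral of any integrand. -/

section ErrorCov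

variable {ι : Type*} [Fintype ι] [DecidableEq ι]

instance (A : Matrix ι ι ℂ) : SFinite (gaussMeasure A) := by
  unfold gaussMeasure; infer_instance

instance (A : Matrix ι ι ℂ) (ε : ℝ) : SFinite (bgMeasure A ε) := by
  unfold bgMeasure; infer_instance

def mmseErrorCov (R S : Matrix ι ι ℂ) (ε : ℝ) : Matrix ι ι ℂ :=
  Matrix.of fun i j => ∫ p : (ι → ℂ) × (ι → ℂ),
    (mmseDenoiser R S ε (p.1 + p.2) i - p.1 i) * star (mmseDenoiser R S ε (p.1 + p.2) j - p.1 j)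
    ∂((bgMeasure R ε).prod (gaussMeasure S))

lemma stateSeq_succ {N : ℕ} (σ2 L : ℝ) (ε : Fin N → ℝ) (R : Fin N → Matrix ι ι ℂ) (t : ℕ) :
    stateSeq σ2 L ε R (t + 1) = (σ2 : ℂ) • (1 : Matrix ι ι ℂ) + ((1 : ℂ) / (L : ℂ)) •
      ∑ n, mmseErrorCov (R n) (stateSeq σ2 L ε R t) (ε n) :=
  rfl

lemma mmseErrorCov_apply_self_nonneg (R S : Matrix ι ι ℂ) (ε : ℝ) (i : ι) :
    0 ≤ mmseErrorCov R S ε i i := by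
  have hmul_star : ∀ z : ℂ, z * star z = (Complex.normSq z : ℂ) := Complex.mul_conj
  simp only [mmseErrorCov, of_apply, hmul_star]
  rw [integral_complex_ofReal]
  exact Complex.zero_le_real.mpr (integral_nonneg fun _ => Complex.normSq_nonneg _)

end ErrorCov

lemma MeasureTheory.MeasurePreserving.withDensity_comp {α β : Type*} [MeasurableSpace α]
    [MeasurableSpace β] {μ : Measure α} {ν : Measure β} {g : α → β}
    (hg : MeasurePreserving g μ ν) (hge : MeasurableEmbedding g) (f : β → ENNReal) :
    MeasurePreserving g (μ.withDensity (f ∘ g)) (ν.withDensity f) := by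
  refine ⟨hg.measurable, Measure.ext fun s hs => ?_⟩
  rw [Measure.map_apply hg.measurable hs, withDensity_apply _ hs,
    withDensity_apply _ (hg.measurable hs), ← hg.setLIntegral_comp_preimage_emb hge]
  rfl

section SignedPerm

variable {ι : Type*}

lemma intCast_units_mul_self (u : ℤˣ) : ((u : ℤ) : ℂ) * (u : ℤ) = 1 := by
  rw [← Int.cast_mul, ← Units.val_mul, Int.units_mul_self, Units.val_one, Int.cast_one]

def signedPerm (u : ι → ℤˣ) (π : Equiv.Perm ι) : (ι → ℂ) ≃ᵐ (ι → ℂ) where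
  toFun ξ i := (u i : ℤ) * ξ (π i)
  invFun ξ i := (u (π.symm i) : ℤ) * ξ (π.symm i)
  left_inv ξ := by
    funext i
    simp only [Equiv.apply_symm_apply, ← mul_assoc, intCast_units_mul_self, one_mul]
  right_inv ξ := by
    funext i
    simp only [Equiv.symm_apply_apply, ← mul_assoc, intCast_units_mul_self, one_mul]
  measurable_toFun := measurable_pi_lambda _ fun i => (measurable_pi_apply (π i)).const_mul _
  measurable_invFun := measurable_pi_lambda _ fun i => (measurable_pi_apply (π.symm i)).const_mul _

variable (u : ι → ℤˣ) (π : Equiv.Perm ι)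

@[simp]
lemma signedPerm_apply (ξ : ι → ℂ) (i : ι) : signedPerm u π ξ i = (u i : ℤ) * ξ (π i) := rfl

lemma signedPerm_add (ξ η : ι → ℂ) :
    signedPerm u π (ξ + η) = signedPerm u π ξ + signedPerm u π η := by
  funext i; simp [mul_add]

lemma signedPerm_zero : signedPerm u π 0 = 0 := by
  funext i; simp

variable [Fintype ι]

lemma measurePreserving_signedPerm_volume :
    MeasurePreserving (signedPerm u π) (volume : Measure (ι → ℂ)) volume := by
  have hπ : MeasurePreserving (fun (ξ : ι → ℂ) i => ξ (π i)) volume volume :=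
    volume_preserving_arrowCongr' π.symm (MeasurableEquiv.refl ℂ) (MeasurePreserving.id _)
  have hu : ∀ i, MeasurePreserving (fun z : ℂ => (u i : ℤ) * z) volume volume := fun i => by
    rcases Int.units_eq_one_or (u i) with h | h <;> simp only [h, Units.val_one, Units.val_neg,
      Int.cast_one, Int.cast_neg, one_mul, neg_one_mul]
    · exact MeasurePreserving.id _
    · exact Measure.measurePreserving_neg _
  exact (volume_preserving_pi hu).comp hπ

variable [DecidableEq ι]

lemma star_dotProduct_diagonal_mulVec_signedPerm {d : ι → ℂ} (hd : ∀ i, d (π i) = d i)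
    (ξ : ι → ℂ) :
    star (signedPerm u π ξ) ⬝ᵥ (diagonal d *ᵥ signedPerm u π ξ) = star ξ ⬝ᵥ (diagonal d *ᵥ ξ) := by
  simp only [dotProduct, mulVec_diagonal, Pi.star_apply, signedPerm_apply]
  calc ∑ i, star ((u i : ℤ) * ξ (π i)) * (d i * ((u i : ℤ) * ξ (π i)))
      = ∑ i, star (ξ (π i)) * (d (π i) * ξ (π i)) := by
        refine Finset.sum_congr rfl fun i _ => ?_
        rw [star_mul', star_intCast, hd]
        linear_combination (star (ξ (π i)) * (d i * ξ (π i))) * intCast_units_mul_self (u i)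
    _ = ∑ i, star (ξ i) * (d i * ξ i) := Equiv.sum_comp π fun j => star (ξ j) * (d j * ξ j)

lemma inv_diagonal_of_ne_zero {d : ι → ℂ} (hd : ∀ i, d i ≠ 0) : (diagonal d)⁻¹ = diagonal d⁻¹ :=
  inv_eq_right_inv <| by
    rw [diagonal_mul_diagonal, ← diagonal_one]
    exact congrArg diagonal (funext fun i => mul_inv_cancel₀ (hd i))

lemma gaussDensity_diagonal_signedPerm {d : ι → ℂ} (hd : ∀ i, d (π i) = d i)
    (hd0 : ∀ i, d i ≠ 0) (ξ : ι → ℂ) :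
    gaussDensity (diagonal d) (signedPerm u π ξ) = gaussDensity (diagonal d) ξ := by
  rw [gaussDensity, gaussDensity, inv_diagonal_of_ne_zero hd0,
    star_dotProduct_diagonal_mulVec_signedPerm u π fun i => congrArg (·⁻¹) (hd i)]

lemma measurePreserving_signedPerm_gaussMeasure {d : ι → ℂ} (hd : ∀ i, d (π i) = d i)
    (hd0 : ∀ i, d i ≠ 0) :
    MeasurePreserving (signedPerm u π) (gaussMeasure (diagonal d)) (gaussMeasure (diagonal d)) := by
  have := (measurePreserving_signedPerm_volume u π).withDensity_comp
    (signedPerm u π).measurableEmbedding fun ξ => ENNReal.ofReal (gaussDensity (diagonal d) ξ).re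
  unfold gaussMeasure
  simpa only [Function.comp_def, gaussDensity_diagonal_signedPerm u π hd hd0] using this

lemma measurePreserving_signedPerm_bgMeasure {d : ι → ℂ} (hd : ∀ i, d (π i) = d i)
    (hd0 : ∀ i, d i ≠ 0) (ε : ℝ) :
    MeasurePreserving (signedPerm u π) (bgMeasure (diagonal d) ε) (bgMeasure (diagonal d) ε) := by
  refine ⟨(signedPerm u π).measurable, ?_⟩
  rw [bgMeasure, Measure.map_add _ _ (signedPerm u π).measurable, Measure.map_smul,
    Measure.map_smul, Measure.map_dirac' (signedPerm u π).measurable, signedPerm_zero,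
    (measurePreserving_signedPerm_gaussMeasure u π hd hd0).map_eq]

variable {r s : ι → ℂ} (hr : ∀ i, r (π i) = r i) (hs : ∀ i, s (π i) = s i)
  (hs0 : ∀ i, s i ≠ 0) (hrs0 : ∀ i, r i + s i ≠ 0)
include hr hs hs0 hrs0

lemma mmseTheta_diagonal_signedPerm (ε : ℝ) (ξ : ι → ℂ) :
    mmseTheta (diagonal r) (diagonal s) ε (signedPerm u π ξ)
      = mmseTheta (diagonal r) (diagonal s) ε ξ := by
  rw [mmseTheta, mmseTheta, diagonal_add, inv_diagonal_of_ne_zero hs0,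
    inv_diagonal_of_ne_zero (d := fun i => r i + s i) hrs0, diagonal_sub,
    star_dotProduct_diagonal_mulVec_signedPerm u π fun i => by simp [hr, hs]]

lemma mmseDenoiser_diagonal_signedPerm (ε : ℝ) (ξ : ι → ℂ) :
    mmseDenoiser (diagonal r) (diagonal s) ε (signedPerm u π ξ)
      = signedPerm u π (mmseDenoiser (diagonal r) (diagonal s) ε ξ) := by
  funext i
  rw [mmseDenoiser, mmseDenoiser, mmseTheta_diagonal_signedPerm u π hr hs hs0 hrs0,
    diagonal_add, inv_diagonal_of_ne_zero (d := fun i => r i + s i) hrs0, diagonal_mul_diagonal]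
  simp only [Pi.smul_apply, smul_eq_mul, mulVec_diagonal, signedPerm_apply, Pi.inv_apply, hr, hs]
  ring

lemma mmseErrorCov_diagonal_apply_signedPerm (hr0 : ∀ i, r i ≠ 0) (ε : ℝ) (i j : ι) :
    mmseErrorCov (diagonal r) (diagonal s) ε i j
      = (u i : ℤ) * (u j : ℤ) * mmseErrorCov (diagonal r) (diagonal s) ε (π i) (π j) := by
  have he : MeasurePreserving (Prod.map (signedPerm u π) (signedPerm u π))
      ((bgMeasure (diagonal r) ε).prod (gaussMeasure (diagonal s)))
      ((bgMeasure (diagonal r) ε).prod (gaussMeasure (diagonal s))) :=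
    (measurePreserving_signedPerm_bgMeasure u π hr hr0 ε).prod
      (measurePreserving_signedPerm_gaussMeasure u π hs hs0)
  simp only [mmseErrorCov, of_apply]
  rw [← he.integral_comp ((signedPerm u π).prodCongr (signedPerm u π)).measurableEmbedding,
    ← integral_const_mul]
  refine integral_congr_ae (Filter.Eventually.of_forall fun p => ?_)
  dsimp only [Prod.map_fst, Prod.map_snd]
  rw [← signedPerm_add, mmseDenoiser_diagonal_signedPerm u π hr hs hs0 hrs0]
  simp only [signedPerm_apply, ← mul_sub, star_mul', star_intCast]
  ring

end SignedPerm

section Diagonal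

variable {ι : Type*} [Fintype ι] [DecidableEq ι] {r s : ι → ℂ}
  (hr0 : ∀ i, r i ≠ 0) (hs0 : ∀ i, s i ≠ 0) (hrs0 : ∀ i, r i + s i ≠ 0) (ε : ℝ)
include hr0 hs0 hrs0

lemma mmseErrorCov_diagonal_apply_of_ne {i j : ι} (hij : i ≠ j) :
    mmseErrorCov (diagonal r) (diagonal s) ε i j = 0 := by
  have h := mmseErrorCov_diagonal_apply_signedPerm (Function.update 1 i (-1)) 1
    (fun _ => rfl) (fun _ => rfl) hs0 hrs0 hr0 ε i j
  simp only [Function.update_self, Function.update_of_ne hij.symm, Pi.one_apply,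
    Equiv.Perm.one_apply, Units.val_neg, Units.val_one, Int.cast_neg, Int.cast_one,
    neg_one_mul] at h
  linear_combination h / 2

lemma mmseErrorCov_diagonal_apply_self_eq {i j : ι} (hr : r i = r j) (hs : s i = s j) :
    mmseErrorCov (diagonal r) (diagonal s) ε i i
      = mmseErrorCov (diagonal r) (diagonal s) ε j j := by
  simpa using mmseErrorCov_diagonal_apply_signedPerm 1 (Equiv.swap i j)
    (Equiv.apply_swap_eq_self hr) (Equiv.apply_swap_eq_self hs) hs0 hrs0 hr0 ε i i

end Diagonal

lemma exists_mmseErrorCov_diagonal_comp_eq {ι κ : Type*} [Fintype ι] [DecidableEq ι]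
    (b : ι → κ) {r s : κ → ℂ} (hr0 : ∀ k, r k ≠ 0) (hs0 : ∀ k, s k ≠ 0)
    (hrs0 : ∀ k, r k + s k ≠ 0) (ε : ℝ) :
    ∃ c : κ → ℝ, (∀ k, 0 ≤ c k) ∧
      mmseErrorCov (diagonal fun i => r (b i)) (diagonal fun i => s (b i)) ε
        = diagonal fun i => (c (b i) : ℂ) := by
  set E := mmseErrorCov (diagonal fun i => r (b i)) (diagonal fun i => s (b i)) ε
  have hfac : Function.FactorsThrough (fun i => (E i i).re) b := fun i j hij => by
    simp only [E, mmseErrorCov_diagonal_apply_self_eq (fun i => hr0 (b i)) (fun i => hs0 (b i))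
      (fun i => hrs0 (b i)) ε (congrArg r hij) (congrArg s hij)]
  refine ⟨Function.extend b (fun i => (E i i).re) 0, fun k => ?_, ?_⟩
  · by_cases hk : ∃ i, b i = k
    · obtain ⟨i, rfl⟩ := hk
      rw [hfac.extend_apply]
      exact (Complex.nonneg_iff.mp (mmseErrorCov_apply_self_nonneg _ _ ε i)).1
    · rw [Function.extend_apply' _ _ _ hk, Pi.zero_apply]
  · ext i j
    rcases eq_or_ne i j with rfl | hij
    · rw [diagonal_apply_eq, hfac.extend_apply]
      exact Complex.eq_re_of_ofReal_le (r := 0)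
        (by exact_mod_cast mmseErrorCov_apply_self_nonneg _ _ ε i)
    · rw [diagonal_apply_ne _ hij]
      exact mmseErrorCov_diagonal_apply_of_ne (fun i => hr0 (b i)) (fun i => hs0 (b i))
        (fun i => hrs0 (b i)) ε hij

lemma exists_pos_smul_one_add_smul_sum_diagonal_eq {ι κ : Type*} [Fintype ι] [DecidableEq ι]
    {N : ℕ} (b : ι → κ) {σ2 L : ℝ} (hσ2 : 0 < σ2) (hL : 0 < L) (c : Fin N → κ → ℝ)
    (hc : ∀ n k, 0 ≤ c n k) :
    ∃ τ : κ → ℝ, (∀ k, 0 < τ k) ∧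
      (σ2 : ℂ) • (1 : Matrix ι ι ℂ) +
          ((1 : ℂ) / (L : ℂ)) • ∑ n, diagonal (fun i => (c n (b i) : ℂ))
        = diagonal fun i => (τ (b i) : ℂ) := by
  refine ⟨fun k => σ2 + 1 / L * ∑ n, c n k, fun k => ?_, ?_⟩
  · exact add_pos_of_pos_of_nonneg hσ2
      (mul_nonneg (one_div_pos.mpr hL).le (Finset.sum_nonneg fun n _ => hc n k))
  · ext i j
    rcases eq_or_ne i j with rfl | hij
    · simp [Matrix.sum_apply]
    · simp [Matrix.sum_apply, hij]

theorem stmt2_general (K M N : ℕ) (σ2 L : ℝ) (hσ2 : 0 < σ2) (hL : 0 < L)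
    (ε : Fin N → ℝ)
    (ρ : Fin K → Fin N → ℝ) (hρ : ∀ k n, 0 < ρ k n)
    (R : Fin N → Matrix (Fin K × Fin M) (Fin K × Fin M) ℂ)
    (hR : ∀ n, ∀ i j : Fin K × Fin M, R n i j = if i = j then (ρ i.1 n : ℂ) else 0) :
    ∀ t : ℕ, ∃ τ : Fin K → ℝ, (∀ k, 0 < τ k) ∧
      ∀ i j : Fin K × Fin M,
        stateSeq σ2 L ε R t i j = if i = j then (τ i.1 : ℂ) else 0 := by
  have hR_diag : ∀ n, R n = diagonal fun i => (ρ i.1 n : ℂ) := fun n => by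
    ext i j; rw [hR, diagonal_apply]
  suffices h : ∀ t, ∃ τ : Fin K → ℝ, (∀ k, 0 < τ k) ∧
      stateSeq σ2 L ε R t = diagonal fun i => (τ i.1 : ℂ) by
    intro t
    obtain ⟨τ, hτ, hS⟩ := h t
    exact ⟨τ, hτ, fun i j => by rw [hS, diagonal_apply]⟩
  intro t
  induction t with
  | zero =>
    rw [stateSeq]
    simp_rw [hR_diag]
    exact exists_pos_smul_one_add_smul_sum_diagonal_eq Prod.fst hσ2 hL (fun n k => ρ k n)
      fun n k => (hρ k n).le
  | succ t ih =>
    obtain ⟨τ, hτ, hS⟩ := ih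
    choose c hc_nonneg hc using fun n =>
      exists_mmseErrorCov_diagonal_comp_eq (Prod.fst : Fin K × Fin M → Fin K)
        (r := fun k => (ρ k n : ℂ)) (s := fun k => (τ k : ℂ))
        (fun k => by exact_mod_cast (hρ k n).ne') (fun k => by exact_mod_cast (hτ k).ne')
        (fun k => by exact_mod_cast (add_pos (hρ k n) (hτ k)).ne') (ε n)
    rw [stateSeq_succ, hS]
    simp_rw [hR_diag, hc]
    exact exists_pos_smul_one_add_smul_sum_diagonal_eq Prod.fst hσ2 hL c hc_nonneg

/-- **Corollary 1.** In the setting of the state evolution, if each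
covariance has the form `Rₙ = bdiag(ρ_{1n}·I_M, …, ρ_{Kn}·I_M)` with `ρ_{kn} > 0`, then
for every `t` there are scalars `τ₁ᵗ, …, τ_Kᵗ > 0` with
`Σᵗ = bdiag(τ₁ᵗ·I_M, …, τ_Kᵗ·I_M)`. -/
theorem stmt2 (K M N : ℕ) (σ2 L : ℝ) (hσ2 : 0 < σ2) (hL : 0 < L)
    (ε : Fin N → ℝ) (hε : ∀ n, 0 < ε n ∧ ε n < 1)
    (ρ : Fin K → Fin N → ℝ) (hρ : ∀ k n, 0 < ρ k n)
    (R : Fin N → Matrix (Fin K × Fin M) (Fin K × Fin M) ℂ)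
    (hR : ∀ n, ∀ i j : Fin K × Fin M, R n i j = if i = j then (ρ i.1 n : ℂ) else 0) :
    ∀ t : ℕ, ∃ τ : Fin K → ℝ, (∀ k, 0 < τ k) ∧
      ∀ i j : Fin K × Fin M,
        stateSeq σ2 L ε R t i j = if i = j then (τ i.1 : ℂ) else 0 :=
  stmt2_general K M N σ2 L hσ2 hL ε ρ hρ R hR

end
end

section
/- Let d = K·M with blocks B_1,…,B_K, let μ be a measure on ℂ^d whose pushforward under η_{B_k} equals μ for every k = 1,…,K, and let g : ℂ^d → ℝ satisfy g(η_{B_k}(ξ)) = g(ξ) for all ξ and all k. Assume that for all indices i, j the function ξ ↦ ξ_i·conj(ξ_j)·g(ξ) is μ-integrable. Then the matrix Q with entries Q_{ij} = ∫ ξ_i·conj(ξ_j)·g(ξ) dμ(ξ) is block-diagonal: Q_{ij} = 0 whenever i and j lie in different blocks. -/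
/-!
If `i ∈ B_k` and `j ∉ B_k`, the flip `η_{B_k}` preserves `μ` and `g` but negates
`ξ_i · conj ξ_j`, so the integral `Q_{ij}` equals its own negative.
-/

open MeasureTheory Matrix
open scoped ComplexOrder

noncomputable section

theorem integral_eq_zero_of_comp_eq_neg {α E : Type*} [MeasurableSpace α] [NormedAddCommGroup E]
    [NormedSpace ℝ E] {μ : Measure α} {η : α → α} (hinv : Function.Involutive η)
    (hmeas : Measurable η) (hμ : μ.map η = μ) {f : α → E} (hf : ∀ x, f (η x) = -f x) :
    ∫ x, f x ∂μ = 0 := by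
  have hpres : MeasurePreserving (MeasurableEquiv.ofInvolutive η hinv hmeas) μ μ := ⟨hmeas, hμ⟩
  have : IsAddTorsionFree E := .of_isTorsionFree ℝ E
  rw [← self_eq_neg, ← integral_neg]
  simpa only [MeasurableEquiv.ofInvolutive_apply, hf] using (hpres.integral_comp' f).symm

section etaFlip

variable {ι : Type*} (I : Set ι)

theorem etaFlip_apply_of_mem {i : ι} (hi : i ∈ I) (ξ : ι → ℂ) : etaFlip I ξ i = -ξ i := by
  classical
  simp [etaFlip, hi]

theorem etaFlip_apply_of_notMem {i : ι} (hi : i ∉ I) (ξ : ι → ℂ) : etaFlip I ξ i = ξ i := by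
  classical
  simp [etaFlip, hi]

theorem etaFlip_involutive : Function.Involutive (etaFlip I) := by
  intro ξ
  funext i
  by_cases hi : i ∈ I <;> simp [etaFlip_apply_of_mem, etaFlip_apply_of_notMem, hi]

theorem measurable_etaFlip : Measurable (etaFlip I) := by
  classical
  refine measurable_pi_lambda _ fun i => ?_
  by_cases hi : i ∈ I
  · simp only [etaFlip_apply_of_mem I hi]
    exact (measurable_pi_apply i).neg
  · simpa only [etaFlip_apply_of_notMem I hi] using measurable_pi_apply i

end etaFlip

theorem stmt7_general (K M : ℕ) (μ : Measure ((Fin K × Fin M) → ℂ))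
    (hμ : ∀ k : Fin K, Measure.map (etaFlip {i : Fin K × Fin M | i.1 = k}) μ = μ)
    (g : ((Fin K × Fin M) → ℂ) → ℝ)
    (hg : ∀ (k : Fin K) (ξ : (Fin K × Fin M) → ℂ),
      g (etaFlip {i : Fin K × Fin M | i.1 = k} ξ) = g ξ) :
    ∀ i j : Fin K × Fin M, i.1 ≠ j.1 →
      (∫ ξ : (Fin K × Fin M) → ℂ, ξ i * star (ξ j) * (g ξ : ℂ) ∂μ) = 0 := by
  intro i j hij
  set B := {l : Fin K × Fin M | l.1 = i.1}
  refine integral_eq_zero_of_comp_eq_neg (etaFlip_involutive B) (measurable_etaFlip B) (hμ i.1)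
    fun ξ => ?_
  rw [hg, etaFlip_apply_of_mem B rfl, etaFlip_apply_of_notMem B (Ne.symm hij)]
  ring

/-- If `μ` is invariant under the block sign flips `η_{B_k}` and
`g : ℂ^d → ℝ` satisfies `g ∘ η_{B_k} = g` for every block `B_k = {k} × Fin M`, and all
entry integrands `ξ ↦ ξᵢ·conj(ξⱼ)·g(ξ)` are `μ`-integrable, then the matrix
`Q_{ij} = ∫ ξᵢ·conj(ξⱼ)·g(ξ) dμ` is block-diagonal. -/
theorem stmt7 (K M : ℕ) (μ : Measure ((Fin K × Fin M) → ℂ))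
    (hμ : ∀ k : Fin K, Measure.map (etaFlip {i : Fin K × Fin M | i.1 = k}) μ = μ)
    (g : ((Fin K × Fin M) → ℂ) → ℝ)
    (hg : ∀ (k : Fin K) (ξ : (Fin K × Fin M) → ℂ),
      g (etaFlip {i : Fin K × Fin M | i.1 = k} ξ) = g ξ)
    (hint : ∀ i j : Fin K × Fin M,
      Integrable (fun ξ : (Fin K × Fin M) → ℂ => ξ i * star (ξ j) * (g ξ : ℂ)) μ) :
    ∀ i j : Fin K × Fin M, i.1 ≠ j.1 →
      (∫ ξ : (Fin K × Fin M) → ℂ, ξ i * star (ξ j) * (g ξ : ℂ) ∂μ) = 0 :=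
  stmt7_general K M μ hμ g hg

end
end
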